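/- Exponential contraction for the frozen fast equation in the deterministic (noise-free) case: let g : H → H be Lipschitz continuous with constant L_g satisfying L_g < π²/L². Suppose Y, Y' : [0,∞) → H are continuous and satisfy the mild equations Y_t = G_t y + ∫₀ᵗ G_{t−s} g(Y_s) ds and Y'_t = G_t y' + ∫₀ᵗ G_{t−s} g(Y'_s) ds for initial data y, y' ∈ H. Then for every t ≥ 0: ‖Y_t − Y'_t‖ ≤ e^{−(π²/L² − L_g) t} ‖y − y'‖. -/

import Mathlib

open MeasureTheory Real
open scoped InnerProductSpace ENNReal

noncomputable section

/-- Lebesgue measure on the interval `(0, L)`. -/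
def μL (L : ℝ) : Measure ℝ := volume.restrict (Set.Ioo (0:ℝ) L)

instance (L : ℝ) : IsFiniteMeasure (μL L) := by
  constructor
  unfold μL
  rw [Measure.restrict_apply_univ, Real.volume_Ioo]
  exact ENNReal.ofReal_lt_top

/-- The Hilbert space `H = L²((0,L), ℝ)`. -/
abbrev Hsp (L : ℝ) := Lp ℝ 2 (μL L)

/-- The function `ξ ↦ √(2/L) · sin(kπξ/L)`. -/
def efun (L : ℝ) (k : ℕ) : ℝ → ℝ :=
  fun ξ => Real.sqrt (2 / L) * Real.sin ((k : ℝ) * π * ξ / L)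

lemma efun_continuous (L : ℝ) (k : ℕ) : Continuous (efun L k) := by
  unfold efun; fun_prop

lemma efun_bound (L : ℝ) (k : ℕ) (ξ : ℝ) : ‖efun L k ξ‖ ≤ Real.sqrt (2 / L) := by
  have h1 : |Real.sin ((k : ℝ) * π * ξ / L)| ≤ 1 :=
    abs_le.mpr ⟨Real.neg_one_le_sin _, Real.sin_le_one _⟩
  calc ‖efun L k ξ‖ = |Real.sqrt (2 / L)| * |Real.sin ((k : ℝ) * π * ξ / L)| := by
        rw [Real.norm_eq_abs, efun, abs_mul]
    _ ≤ Real.sqrt (2 / L) * 1 := by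
        rw [abs_of_nonneg (Real.sqrt_nonneg _)]
        exact mul_le_mul_of_nonneg_left h1 (Real.sqrt_nonneg _)
    _ = Real.sqrt (2 / L) := mul_one _

lemma efun_memℒp (L : ℝ) (k : ℕ) : MemLp (efun L k) 2 (μL L) :=
  (memLp_top_of_bound (efun_continuous L k).aestronglyMeasurable _
      (ae_of_all _ (efun_bound L k))).mono_exponent le_top

/-- The eigenfunction `e_{k+1}` as an element of `H` (so `eb L k` is `e_{k+1}`,
i.e. the family `eb L` runs over `e_k`, `k ≥ 1`). -/
def eb (L : ℝ) (k : ℕ) : Hsp L := (efun_memℒp L (k + 1)).toLp (efun L (k + 1))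

/-- The eigenvalue `α_{k+1} = (k+1)²π²/L²` (so `alphaK L` runs over `α_k`, `k ≥ 1`). -/
def alphaK (L : ℝ) (k : ℕ) : ℝ := ((k : ℝ) + 1) ^ 2 * π ^ 2 / L ^ 2

/-- The Fourier coefficient `⟨u, e_{k+1}⟩`. -/
def coeff (L : ℝ) (u : Hsp L) (k : ℕ) : ℝ := ⟪u, eb L k⟫_ℝ

/-- The heat Green operator `G_t h = Σ_{k≥1} e^{−α_k t} ⟨h, e_k⟩ e_k`. -/
def Gop (L t : ℝ) (h : Hsp L) : Hsp L :=
  ∑' k, (Real.exp (-(alphaK L k) * t) * coeff L h k) • eb L k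

/-- The wave Green operator `S_t h = Σ_{k≥1} (sin(√α_k t)/√α_k) ⟨h, e_k⟩ e_k`. -/
def Sop (L t : ℝ) (h : Hsp L) : Hsp L :=
  ∑' k, ((Real.sin (Real.sqrt (alphaK L k) * t) / Real.sqrt (alphaK L k)) * coeff L h k) • eb L k

/-- The derived wave Green operator `S'_t h = Σ_{k≥1} cos(√α_k t) ⟨h, e_k⟩ e_k`. -/
def Sop' (L t : ℝ) (h : Hsp L) : Hsp L :=
  ∑' k, (Real.cos (Real.sqrt (alphaK L k) * t) * coeff L h k) • eb L k

/-- The second derived wave Green operator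
`S''_t h = −Σ_{k≥1} √α_k sin(√α_k t) ⟨h, e_k⟩ e_k`. -/
def Sop'' (L t : ℝ) (h : Hsp L) : Hsp L :=
  -∑' k, (Real.sqrt (alphaK L k) * Real.sin (Real.sqrt (alphaK L k) * t) * coeff L h k) • eb L k


open Filter Set
open scoped Topology

/-! Write `α = π²/L²`. In the eigenbasis `(e_k)` the operator `G_t` is diagonal with multipliers
`e^{-α_k t} ≤ e^{-α t}`, so `‖G_t h‖ ≤ e^{-α t} ‖h‖` and `G_t h` depends continuously on `t`.
Subtracting the two mild equations, `f t = ‖Y_t - Y'_t‖` satisfies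
`f t ≤ e^{-α t} ‖y - y'‖ + L_g ∫₀ᵗ e^{-α (t-s)} f s ds`; for `φ t = e^{α t} f t` this reads
`φ t ≤ ‖y - y'‖ + L_g ∫₀ᵗ φ`, and Grönwall's inequality gives `φ t ≤ ‖y - y'‖ e^{L_g t}`. -/

section DiagonalOperator

variable {E : Type*} [NormedAddCommGroup E] [InnerProductSpace ℝ E]
  {v : ℕ → E} {m : ℕ → ℝ} {c : ℝ}

def diagonalOp (v : ℕ → E) (m : ℕ → ℝ) (h : E) : E :=
  ∑' k, (m k * ⟪h, v k⟫_ℝ) • v k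

lemma Orthonormal.summable_inner_sq (hv : Orthonormal ℝ v) (h : E) :
    Summable fun k => ⟪h, v k⟫_ℝ ^ 2 := by
  simpa [Real.norm_eq_abs, sq_abs, real_inner_comm] using hv.inner_products_summable h

lemma Orthonormal.tsum_inner_sq_le (hv : Orthonormal ℝ v) (h : E) :
    ∑' k, ⟪h, v k⟫_ℝ ^ 2 ≤ ‖h‖ ^ 2 := by
  simpa [Real.norm_eq_abs, sq_abs, real_inner_comm] using hv.tsum_inner_products_le h

lemma summable_mul_inner_sq (hv : Orthonormal ℝ v) (hm : ∀ k, |m k| ≤ c) (h : E) :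
    Summable fun k => (m k * ⟪h, v k⟫_ℝ) ^ 2 := by
  refine ((hv.summable_inner_sq h).mul_left (c ^ 2)).of_nonneg_of_le (fun _ => sq_nonneg _)
    fun k => ?_
  rw [mul_pow, ← sq_abs (m k)]
  gcongr
  exact hm k

variable [CompleteSpace E]

lemma Orthonormal.summable_smul (hv : Orthonormal ℝ v) {a : ℕ → ℝ}
    (ha : Summable fun k => a k ^ 2) : Summable fun k => a k • v k := by
  simpa using (hv.orthogonalFamily.summable_iff_norm_sq_summable a).mpr
    (by simpa [Real.norm_eq_abs, sq_abs] using ha)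

lemma Orthonormal.norm_tsum_smul_sq (hv : Orthonormal ℝ v) {a : ℕ → ℝ}
    (ha : Summable fun k => a k ^ 2) : ‖∑' k, a k • v k‖ ^ 2 = ∑' k, a k ^ 2 := by
  have hpartial : ∀ s : Finset ℕ, ‖∑ k ∈ s, a k • v k‖ ^ 2 = ∑ k ∈ s, a k ^ 2 := fun s => by
    simpa [Real.norm_eq_abs, sq_abs] using hv.orthogonalFamily.norm_sum a s
  have hlim := ((continuous_norm.tendsto _).comp (hv.summable_smul ha).hasSum).pow 2
  simp only [Function.comp_def, hpartial] at hlim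
  exact tendsto_nhds_unique hlim ha.hasSum

lemma summable_diagonalOp (hv : Orthonormal ℝ v) (hm : ∀ k, |m k| ≤ c) (h : E) :
    Summable fun k => (m k * ⟪h, v k⟫_ℝ) • v k :=
  hv.summable_smul (summable_mul_inner_sq hv hm h)

lemma norm_diagonalOp_sq (hv : Orthonormal ℝ v) (hm : ∀ k, |m k| ≤ c) (h : E) :
    ‖diagonalOp v m h‖ ^ 2 = ∑' k, (m k * ⟪h, v k⟫_ℝ) ^ 2 :=
  hv.norm_tsum_smul_sq (summable_mul_inner_sq hv hm h)

lemma norm_diagonalOp_le (hv : Orthonormal ℝ v) (hm : ∀ k, |m k| ≤ c) (h : E) :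
    ‖diagonalOp v m h‖ ≤ c * ‖h‖ := by
  have hc : 0 ≤ c := (abs_nonneg _).trans (hm 0)
  refine le_of_sq_le_sq ?_ (by positivity)
  calc ‖diagonalOp v m h‖ ^ 2 = ∑' k, (m k * ⟪h, v k⟫_ℝ) ^ 2 := norm_diagonalOp_sq hv hm h
    _ ≤ ∑' k, c ^ 2 * ⟪h, v k⟫_ℝ ^ 2 := by
        refine (summable_mul_inner_sq hv hm h).tsum_le_tsum (fun k => ?_)
          ((hv.summable_inner_sq h).mul_left _)
        rw [mul_pow, ← sq_abs (m k)]
        gcongr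
        exact hm k
    _ = c ^ 2 * ∑' k, ⟪h, v k⟫_ℝ ^ 2 := tsum_mul_left
    _ ≤ (c * ‖h‖) ^ 2 := by
        rw [mul_pow]
        gcongr
        exact hv.tsum_inner_sq_le h

lemma diagonalOp_sub (hv : Orthonormal ℝ v) (hm : ∀ k, |m k| ≤ c) (h h' : E) :
    diagonalOp v m (h - h') = diagonalOp v m h - diagonalOp v m h' := by
  rw [diagonalOp, diagonalOp, diagonalOp,
    ← (summable_diagonalOp hv hm h).tsum_sub (summable_diagonalOp hv hm h')]
  simp only [inner_sub_left, mul_sub, sub_smul]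

lemma diagonalOp_sub_diagonalOp {m' : ℕ → ℝ} {c' : ℝ} (hv : Orthonormal ℝ v)
    (hm : ∀ k, |m k| ≤ c) (hm' : ∀ k, |m' k| ≤ c') (h : E) :
    diagonalOp v m h - diagonalOp v m' h = diagonalOp v (m - m') h := by
  rw [diagonalOp, diagonalOp, diagonalOp,
    ← (summable_diagonalOp hv hm h).tsum_sub (summable_diagonalOp hv hm' h)]
  simp only [Pi.sub_apply, sub_mul, sub_smul]

lemma tendsto_diagonalOp {ι : Type*} {l : Filter ι} {M : ι → ℕ → ℝ} (hv : Orthonormal ℝ v)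
    (hM : ∀ᶠ i in l, ∀ k, |M i k| ≤ c) (hm : ∀ k, |m k| ≤ c)
    (hlim : ∀ k, Tendsto (fun i => M i k) l (𝓝 (m k))) (h : E) :
    Tendsto (fun i => diagonalOp v (M i) h) l (𝓝 (diagonalOp v m h)) := by
  rw [tendsto_iff_norm_sub_tendsto_zero]
  have hsq : Tendsto (fun i => ∑' k, ((M i k - m k) * ⟪h, v k⟫_ℝ) ^ 2) l (𝓝 0) := by
    have hdom := tendsto_tsum_of_dominated_convergence
      (bound := fun k => (2 * c) ^ 2 * ⟪h, v k⟫_ℝ ^ 2) ((hv.summable_inner_sq h).mul_left _)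
      (fun k => (((hlim k).sub_const (m k)).mul_const ⟪h, v k⟫_ℝ).pow 2) ?_
    · simpa using hdom
    filter_upwards [hM] with i hi k
    rw [Real.norm_eq_abs, abs_sq, mul_pow, ← sq_abs (M i k - m k)]
    gcongr
    linarith [abs_sub (M i k) (m k), hi k, hm k]
  have hbound : ∀ᶠ i in l, ∀ k, |(M i - m) k| ≤ 2 * c := by
    filter_upwards [hM] with i hi k
    rw [Pi.sub_apply]
    linarith [abs_sub (M i k) (m k), hi k, hm k]
  refine Tendsto.congr' ?_ (by simpa using hsq.sqrt)
  filter_upwards [hM, hbound] with i hi hb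
  rw [diagonalOp_sub_diagonalOp hv hi hm, ← Real.sqrt_sq (norm_nonneg _),
    norm_diagonalOp_sq hv hb]
  rfl

lemma continuousOn_diagonalOp {M : ℝ → ℕ → ℝ} {w : ℝ → E} {s : Set ℝ}
    (hv : Orthonormal ℝ v) (hM : ∀ τ ∈ s, ∀ k, |M τ k| ≤ c)
    (hMc : ∀ k, ContinuousOn (fun τ => M τ k) s) (hw : ContinuousOn w s) :
    ContinuousOn (fun τ => diagonalOp v (M τ) (w τ)) s := by
  intro τ₀ hτ₀
  have hM' : ∀ᶠ τ in 𝓝[s] τ₀, ∀ k, |M τ k| ≤ c := eventually_mem_nhdsWithin.mono hM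
  have hsmall : Tendsto (fun τ => diagonalOp v (M τ) (w τ - w τ₀)) (𝓝[s] τ₀) (𝓝 0) := by
    refine squeeze_zero_norm' (hM'.mono fun τ hτ => norm_diagonalOp_le hv hτ _) ?_
    simpa using (((hw τ₀ hτ₀).sub_const (w τ₀)).norm.const_mul c)
  have hfixed := tendsto_diagonalOp hv hM' (hM τ₀ hτ₀) (fun k => hMc k τ₀ hτ₀) (w τ₀)
  refine Tendsto.congr' ?_ (by simpa using hsmall.add hfixed)
  filter_upwards [hM'] with τ hτ
  rw [diagonalOp_sub hv hτ]
  abel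

end DiagonalOperator

lemma integral_cos_int_mul_pi_div {L : ℝ} (hL : L ≠ 0) {n : ℤ} (hn : n ≠ 0) :
    ∫ ξ in (0:ℝ)..L, cos (n * π * ξ / L) = 0 := by
  have hc : (n * π / L : ℝ) ≠ 0 := by positivity
  have := intervalIntegral.integral_comp_mul_left (fun x => cos x) hc (a := 0) (b := L)
  simp only [div_mul_eq_mul_div _ L] at this
  rw [this, integral_cos, mul_div_cancel_right₀ _ hL, sin_int_mul_pi]
  simp

lemma integral_efun_mul_efun {L : ℝ} (hL : 0 < L) {j k : ℕ} (hj : j ≠ 0) :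
    ∫ ξ in (0:ℝ)..L, efun L j ξ * efun L k ξ = if j = k then 1 else 0 := by
  have hprod : ∀ ξ, efun L j ξ * efun L k ξ
      = (cos (((j - k : ℤ) : ℝ) * π * ξ / L) - cos (((j + k : ℤ) : ℝ) * π * ξ / L)) / L := by
    intro ξ
    have hsq : √(2 / L) ^ 2 = 2 / L := Real.sq_sqrt (by positivity)
    have hsub : ((j - k : ℤ) : ℝ) * π * ξ / L = j * π * ξ / L - k * π * ξ / L := by
      push_cast; ring
    have hadd : ((j + k : ℤ) : ℝ) * π * ξ / L = j * π * ξ / L + k * π * ξ / L := by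
      push_cast; ring
    rw [hsub, hadd, cos_sub, cos_add]
    calc efun L j ξ * efun L k ξ
        = √(2 / L) ^ 2 * (sin (j * π * ξ / L) * sin (k * π * ξ / L)) := by
          simp only [efun]; ring
      _ = _ := by rw [hsq]; field_simp; ring
  have hjk : (j + k : ℤ) ≠ 0 := by omega
  simp_rw [hprod]
  rw [intervalIntegral.integral_div,
    intervalIntegral.integral_sub (Continuous.intervalIntegrable (by fun_prop) _ _)
      (Continuous.intervalIntegrable (by fun_prop) _ _), integral_cos_int_mul_pi_div hL.ne' hjk]
  split_ifs with h
  · subst h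
    simp [hL.ne']
  · rw [integral_cos_int_mul_pi_div hL.ne' (by omega)]
    simp

lemma inner_eb {L : ℝ} (hL : 0 < L) (j k : ℕ) :
    ⟪eb L j, eb L k⟫_ℝ = if j = k then 1 else 0 := by
  have hinner : ⟪eb L j, eb L k⟫_ℝ = ∫ ξ, efun L (j + 1) ξ * efun L (k + 1) ξ ∂(μL L) := by
    rw [eb, eb, L2.inner_def]
    refine integral_congr_ae ?_
    filter_upwards [(efun_memℒp L (j + 1)).coeFn_toLp, (efun_memℒp L (k + 1)).coeFn_toLp]
      with ξ hj hk
    simp [hj, hk, mul_comm]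
  rw [hinner, μL, ← integral_Ioc_eq_integral_Ioo, ← intervalIntegral.integral_of_le hL.le,
    integral_efun_mul_efun hL (Nat.succ_ne_zero j)]
  simp

lemma orthonormal_eb {L : ℝ} (hL : 0 < L) : Orthonormal ℝ (eb L) :=
  orthonormal_iff_ite.mpr (inner_eb hL)

lemma Gop_eq_diagonalOp (L t : ℝ) :
    Gop L t = diagonalOp (eb L) fun k => exp (-alphaK L k * t) :=
  rfl

lemma abs_exp_neg_alphaK_mul_le (L : ℝ) {t : ℝ} (ht : 0 ≤ t) (k : ℕ) :
    |exp (-alphaK L k * t)| ≤ exp (-(π ^ 2 / L ^ 2) * t) := by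
  have hα : π ^ 2 / L ^ 2 ≤ alphaK L k := by
    rw [alphaK, mul_div_assoc]
    exact le_mul_of_one_le_left (by positivity) (by nlinarith [k.cast_nonneg (α := ℝ)])
  rw [abs_of_pos (exp_pos _), exp_le_exp]
  nlinarith

lemma abs_exp_neg_alphaK_mul_le_one (L : ℝ) {t : ℝ} (ht : 0 ≤ t) (k : ℕ) :
    |exp (-alphaK L k * t)| ≤ 1 :=
  (abs_exp_neg_alphaK_mul_le L ht k).trans
    (exp_le_one_iff.mpr (mul_nonpos_of_nonpos_of_nonneg (neg_nonpos.mpr (by positivity)) ht))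

lemma norm_Gop_le {L t : ℝ} (hL : 0 < L) (ht : 0 ≤ t) (h : Hsp L) :
    ‖Gop L t h‖ ≤ exp (-(π ^ 2 / L ^ 2) * t) * ‖h‖ := by
  rw [Gop_eq_diagonalOp]
  exact norm_diagonalOp_le (orthonormal_eb hL) (abs_exp_neg_alphaK_mul_le L ht) h

lemma Gop_sub {L t : ℝ} (hL : 0 < L) (ht : 0 ≤ t) (u v : Hsp L) :
    Gop L t (u - v) = Gop L t u - Gop L t v := by
  rw [Gop_eq_diagonalOp]
  exact diagonalOp_sub (orthonormal_eb hL) (abs_exp_neg_alphaK_mul_le L ht) u v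

lemma continuousOn_Gop_sub_apply {L t : ℝ} (hL : 0 < L) {w : ℝ → Hsp L}
    (hw : ContinuousOn w (Icc 0 t)) : ContinuousOn (fun s => Gop L (t - s) (w s)) (Icc 0 t) := by
  simp only [Gop_eq_diagonalOp]
  exact continuousOn_diagonalOp (orthonormal_eb hL)
    (fun s hs => abs_exp_neg_alphaK_mul_le_one L (sub_nonneg.mpr hs.2))
    (fun _ => by fun_prop) hw

lemma le_mul_exp_of_le_add_mul_integral {φ : ℝ → ℝ} {C K t : ℝ} (hφ : ContinuousOn φ (Ici 0))
    (hK : 0 ≤ K) (ht : 0 ≤ t) (h : ∀ u ∈ Icc 0 t, φ u ≤ C + K * ∫ s in (0:ℝ)..u, φ s) :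
    φ t ≤ C * exp (K * t) := by
  set F : ℝ → ℝ := fun u => ∫ s in (0:ℝ)..u, φ s
  have hFderiv : ∀ x ∈ Ico 0 t, HasDerivWithinAt F (φ x) (Ici x) x := fun x hx =>
    have hφx : ContinuousOn φ (Ici x) := hφ.mono (Ici_subset_Ici.mpr hx.1)
    intervalIntegral.integral_hasDerivWithinAt_right (t := Ioi x)
      ((hφ.mono (by simp [uIcc_of_le hx.1, Icc_subset_Ici_self])).intervalIntegrable)
      ((hφx.mono Ioi_subset_Ici_self).stronglyMeasurableAtFilter_nhdsWithin measurableSet_Ioi x)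
      ((hφx x self_mem_Ici).mono Ioi_subset_Ici_self)
  have hFcont : ContinuousOn F (Icc 0 t) := by
    have hint : IntegrableOn φ (uIcc 0 t) := by
      rw [uIcc_of_le ht]
      exact (hφ.mono Icc_subset_Ici_self).integrableOn_compact isCompact_Icc
    simpa [uIcc_of_le ht] using intervalIntegral.continuousOn_primitive_interval hint
  have hFt : F t ≤ gronwallBound 0 K C t := by
    simpa using le_gronwallBound_of_liminf_deriv_right_le hFcont
      (fun x hx _ hr => (hFderiv x hx).liminf_right_slope_le hr) (by simp [F])
      (fun x hx => by linarith [h x (Ico_subset_Icc_self hx)]) t ⟨ht, le_rfl⟩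
  calc φ t ≤ C + K * F t := h t ⟨ht, le_rfl⟩
    _ ≤ C + K * gronwallBound 0 K C t := by gcongr
    _ = C * exp (K * t) := by
        rcases hK.eq_or_lt with rfl | hKpos
        · simp
        · rw [gronwallBound_of_K_ne_0 hKpos.ne']
          field_simp
          ring

lemma le_exp_mul_of_le_exp_mul_add_integral {f : ℝ → ℝ} {α C K t : ℝ}
    (hf : ContinuousOn f (Ici 0)) (hK : 0 ≤ K) (ht : 0 ≤ t)
    (h : ∀ u ∈ Icc 0 t,
      f u ≤ exp (-α * u) * C + ∫ s in (0:ℝ)..u, exp (-α * (u - s)) * (K * f s)) :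
    f t ≤ exp (-(α - K) * t) * C := by
  have hweighted : ∀ u ∈ Icc 0 t,
      exp (α * u) * f u ≤ C + K * ∫ s in (0:ℝ)..u, exp (α * s) * f s := by
    intro u hu
    have hrhs : exp (α * u) * (exp (-α * u) * C
        + ∫ s in (0:ℝ)..u, exp (-α * (u - s)) * (K * f s))
        = C + K * ∫ s in (0:ℝ)..u, exp (α * s) * f s := by
      rw [mul_add, ← mul_assoc, ← exp_add, ← intervalIntegral.integral_const_mul,
        ← intervalIntegral.integral_const_mul]
      congr 1
      · simp
      · congr 1 with s
        rw [← mul_assoc, ← exp_add]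
        ring_nf
    exact hrhs ▸ mul_le_mul_of_nonneg_left (h u hu) (exp_nonneg _)
  have hexp := le_mul_exp_of_le_add_mul_integral (by fun_prop) hK ht hweighted
  calc f t = exp (-α * t) * (exp (α * t) * f t) := by rw [← mul_assoc, ← exp_add]; simp
    _ ≤ exp (-α * t) * (C * exp (K * t)) := by gcongr
    _ = exp (-(α - K) * t) * C := by
        rw [show -(α - K) * t = -α * t + K * t by ring, exp_add]
        ring

lemma norm_sub_le_of_mild {L Lg u : ℝ} (hL : 0 < L) {g : Hsp L → Hsp L}
    (hg : ∀ u v : Hsp L, ‖g u - g v‖ ≤ Lg * ‖u - v‖) {y y' : Hsp L} {Y Y' : ℝ → Hsp L}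
    (hYc : ContinuousOn Y (Ici 0)) (hY'c : ContinuousOn Y' (Ici 0))
    (hY : ∀ t : ℝ, 0 ≤ t → Y t = Gop L t y + ∫ s in (0:ℝ)..t, Gop L (t - s) (g (Y s)))
    (hY' : ∀ t : ℝ, 0 ≤ t → Y' t = Gop L t y' + ∫ s in (0:ℝ)..t, Gop L (t - s) (g (Y' s)))
    (hu : 0 ≤ u) :
    ‖Y u - Y' u‖ ≤ exp (-(π ^ 2 / L ^ 2) * u) * ‖y - y'‖
      + ∫ s in (0:ℝ)..u, exp (-(π ^ 2 / L ^ 2) * (u - s)) * (Lg * ‖Y s - Y' s‖) := by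
  have hgc : Continuous g :=
    (LipschitzWith.of_dist_le' (by simpa [dist_eq_norm] using hg)).continuous
  have hsub : Icc 0 u ⊆ Ici 0 := Icc_subset_Ici_self
  have hint : ∀ {Z : ℝ → Hsp L}, ContinuousOn Z (Ici 0) →
      IntervalIntegrable (fun s => Gop L (u - s) (g (Z s))) volume 0 u := fun hZ =>
    ContinuousOn.intervalIntegrable (by
      rw [uIcc_of_le hu]
      exact continuousOn_Gop_sub_apply hL (hgc.comp_continuousOn (hZ.mono hsub)))
  have hdiff : Y u - Y' u = Gop L u (y - y')
      + ∫ s in (0:ℝ)..u, Gop L (u - s) (g (Y s) - g (Y' s)) := by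
    have hsplit : EqOn (fun s => Gop L (u - s) (g (Y s) - g (Y' s)))
        (fun s => Gop L (u - s) (g (Y s)) - Gop L (u - s) (g (Y' s))) (uIcc 0 u) := fun s hs =>
      Gop_sub hL (sub_nonneg.mpr (uIcc_of_le hu ▸ hs).2) _ _
    rw [hY u hu, hY' u hu, Gop_sub hL hu, intervalIntegral.integral_congr hsplit,
      intervalIntegral.integral_sub (hint hYc) (hint hY'c)]
    abel
  rw [hdiff]
  refine (norm_add_le _ _).trans (add_le_add (norm_Gop_le hL hu _) ?_)
  refine intervalIntegral.norm_integral_le_of_norm_le hu (ae_of_all _ fun s hs => ?_) ?_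
  · exact (norm_Gop_le hL (sub_nonneg.mpr hs.2) _).trans (by gcongr; exact hg _ _)
  · refine ContinuousOn.intervalIntegrable ?_
    rw [uIcc_of_le hu]
    exact (Continuous.continuousOn (by fun_prop)).mul
      (continuousOn_const.mul ((hYc.sub hY'c).mono hsub).norm)

theorem stmt_14_general (L : ℝ) (hL : 0 < L) (g : Hsp L → Hsp L) (Lg : ℝ)
    (hg : ∀ u v : Hsp L, ‖g u - g v‖ ≤ Lg * ‖u - v‖)
    (y y' : Hsp L) (Y Y' : ℝ → Hsp L)
    (hYc : ContinuousOn Y (Set.Ici (0:ℝ))) (hY'c : ContinuousOn Y' (Set.Ici (0:ℝ)))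
    (hY : ∀ t : ℝ, 0 ≤ t → Y t = Gop L t y + ∫ s in (0:ℝ)..t, Gop L (t - s) (g (Y s)))
    (hY' : ∀ t : ℝ, 0 ≤ t → Y' t = Gop L t y' + ∫ s in (0:ℝ)..t, Gop L (t - s) (g (Y' s))) :
    ∀ t : ℝ, 0 ≤ t →
      ‖Y t - Y' t‖ ≤ Real.exp (-(π ^ 2 / L ^ 2 - Lg) * t) * ‖y - y'‖ := by
  intro t ht
  have hLg : 0 ≤ Lg := by
    simpa [(orthonormal_eb hL).1 0] using (norm_nonneg _).trans (hg (eb L 0) 0)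
  exact le_exp_mul_of_le_exp_mul_add_integral (hYc.sub hY'c).norm hLg ht fun u hu =>
    norm_sub_le_of_mild hL hg hYc hY'c hY hY' hu.1

/-- Exponential contraction for the deterministic frozen fast equation:
if `g` is Lipschitz with constant `L_g < π²/L²` and `Y, Y'` are continuous mild solutions on
`[0,∞)` with initial data `y, y'`, then `‖Y_t − Y'_t‖ ≤ e^{−(π²/L² − L_g)t} ‖y − y'‖` for all
`t ≥ 0`. -/
theorem stmt_14 (L : ℝ) (hL : 0 < L) (g : Hsp L → Hsp L) (Lg : ℝ)
    (hg : ∀ u v : Hsp L, ‖g u - g v‖ ≤ Lg * ‖u - v‖) (hLg : Lg < π ^ 2 / L ^ 2)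
    (y y' : Hsp L) (Y Y' : ℝ → Hsp L)
    (hYc : ContinuousOn Y (Set.Ici (0:ℝ))) (hY'c : ContinuousOn Y' (Set.Ici (0:ℝ)))
    (hY : ∀ t : ℝ, 0 ≤ t → Y t = Gop L t y + ∫ s in (0:ℝ)..t, Gop L (t - s) (g (Y s)))
    (hY' : ∀ t : ℝ, 0 ≤ t → Y' t = Gop L t y' + ∫ s in (0:ℝ)..t, Gop L (t - s) (g (Y' s))) :
    ∀ t : ℝ, 0 ≤ t →
      ‖Y t - Y' t‖ ≤ Real.exp (-(π ^ 2 / L ^ 2 - Lg) * t) * ‖y - y'‖ :=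
  stmt_14_general L hL g Lg hg y y' Y Y' hYc hY'c hY hY'
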